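/- arXiv:2309.05625 — 4 statements merged into one kernel-verified Lean document; each statement's English description precedes it below -/
import Mathlib

section
/- Let n ≥ 1. There exists a constant C depending only on n with the following property. Let S ⊆ ℝⁿ be a bounded open set and let g be a real-valued function that is continuous on the closure of S, differentiable at every point of S, and vanishes identically on the topological boundary of S. Suppose that for some constants B, D > 0 one has (i) ∫_S g(x)² dx ≤ D and (ii) |∇g(x) − ∇g(y)| ≤ B·|x − y|^{1/2} for all x, y ∈ S. Then ∫_S |∇g(x)|⁶ dx ≤ C·B⁴·D; equivalently, ‖∇g‖_{L⁶(S)} ≤ C^{1/6}·B^{2/3}·D^{1/6}. -/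
/-!
Slicing along coordinate lines reduces the estimate to one dimension: for `h` vanishing off an
open set `I ⊆ ℝ`, differentiable on `I`, with `h'` `½`-Hölder with constant `B` on `I`, one has
`∫_I h'^6 ≤ C B⁴ ∫ h²`.

Fix `x ∈ I` with `M = |h'(x)| > 0` and put `ρ = M² / (4B²)`. On `I ∩ [x - ρ, x + ρ]` the
derivative stays within `M / 2` of `h'(x)`, so it does not vanish there; since `h` vanishes at the
points where `[x - ρ, x + ρ]` leaves `I`, Rolle's theorem shows that one of the two halves
`[x - ρ, x]`, `[x, x + ρ]` lies in `I`. On it `h` is monotone with slope at least `M / 2`, hence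
`|h| ≥ M ρ / 8` on a subinterval of length `ρ / 4`, on which also `|h'| ≈ M`. This gives
`M⁶ ≲ B⁶ ∫_{|y - x| ≤ h'(y)² / B²} h(y)² / h'(y)² dy`, and integrating in `x` (Tonelli) the
length `2 h'(y)² / B²` of the `x`-interval cancels the weight, leaving `B⁴ ∫ h²`.
-/

open MeasureTheory Set Metric
open scoped ENNReal NNReal

lemma IsOpen.exists_Ico_subset_of_notMem {I : Set ℝ} (hI : IsOpen I) {x t : ℝ} (hx : x ∈ I)
    (ht : t ∉ I) (hxt : x ≤ t) : ∃ T ∈ Ioc x t, T ∉ I ∧ Ico x T ⊆ I := by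
  have hK : IsClosed (Icc x t ∩ Iᶜ) := isClosed_Icc.inter hI.isClosed_compl
  obtain ⟨⟨hxT, hTt⟩, hT⟩ := hK.csInf_mem ⟨t, ⟨hxt, le_rfl⟩, ht⟩ ⟨x, fun s hs => hs.1.1⟩
  refine ⟨_, ⟨hxT.lt_of_ne fun h => hT (h ▸ hx), hTt⟩, hT, fun s hs => ?_⟩
  by_contra hsI
  exact hs.2.not_ge (csInf_le ⟨x, fun s hs => hs.1.1⟩ ⟨⟨hs.1, hs.2.le.trans hTt⟩, hsI⟩)

lemma IsOpen.exists_Ioc_subset_of_notMem {I : Set ℝ} (hI : IsOpen I) {x t : ℝ} (hx : x ∈ I)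
    (ht : t ∉ I) (htx : t ≤ x) : ∃ T ∈ Ico t x, T ∉ I ∧ Ioc T x ⊆ I := by
  have hK : IsClosed (Icc t x ∩ Iᶜ) := isClosed_Icc.inter hI.isClosed_compl
  obtain ⟨⟨htT, hTx⟩, hT⟩ := hK.csSup_mem ⟨t, ⟨le_rfl, htx⟩, ht⟩ ⟨x, fun s hs => hs.1.2⟩
  refine ⟨_, ⟨htT, hTx.lt_of_ne fun h => hT (h.symm ▸ hx)⟩, hT, fun s hs => ?_⟩
  by_contra hsI
  exact hs.1.not_ge (le_csSup ⟨x, fun s hs => hs.1.2⟩ ⟨⟨htT.trans hs.1.le, hs.2⟩, hsI⟩)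

lemma exists_Ioo_le_abs_of_le_deriv {f : ℝ → ℝ} {a L C : ℝ} (hL : 0 < L) (hC : 0 ≤ C)
    (hf : ContinuousOn f (Icc a (a + L))) (hfd : DifferentiableOn ℝ f (Ioo a (a + L)))
    (hf' : ∀ y ∈ Ioo a (a + L), C ≤ deriv f y) :
    ∃ c, Ioo c (c + L / 4) ⊆ Ioo a (a + L) ∧ ∀ y ∈ Ioo c (c + L / 4), C * L / 4 ≤ |f y| := by
  rw [← interior_Icc] at hfd hf'
  have incr := (convex_Icc a (a + L)).mul_sub_le_image_sub_of_le_deriv hf hfd hf'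
  have hm : a + L / 2 ∈ Icc a (a + L) := ⟨by linarith, by linarith⟩
  -- `f` is at least `C L / 4` on the last quarter if `f ≥ 0` at the midpoint, and at most
  -- `-C L / 4` on the first quarter otherwise.
  rcases le_or_gt 0 (f (a + L / 2)) with hfm | hfm
  · refine ⟨a + 3 * L / 4, fun y hy => ⟨by linarith [hy.1], by linarith [hy.2]⟩, fun y hy => ?_⟩
    have := incr _ hm y ⟨by linarith [hy.1], by linarith [hy.2]⟩ (by linarith [hy.1])
    nlinarith [le_abs_self (f y), hy.1]
  · refine ⟨a, fun y hy => ⟨hy.1, by linarith [hy.2]⟩, fun y hy => ?_⟩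
    have := incr y ⟨hy.1.le, by linarith [hy.2]⟩ _ hm (by linarith [hy.2])
    nlinarith [neg_abs_le (f y), hy.2]

lemma lintegral_setLIntegral_dist_le_eq {r : ℝ → ℝ} {w : ℝ → ℝ≥0∞} (hr : Measurable r)
    (hw : Measurable w) :
    ∫⁻ x, ∫⁻ y in {y | dist x y ≤ r y}, w y = ∫⁻ y, ENNReal.ofReal (2 * r y) * w y := by
  have hA : MeasurableSet {p : ℝ × ℝ | dist p.1 p.2 ≤ r p.2} :=
    measurableSet_le (measurable_fst.dist measurable_snd) (hr.comp measurable_snd)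
  calc ∫⁻ x, ∫⁻ y in {y | dist x y ≤ r y}, w y
      = ∫⁻ x, ∫⁻ y, {p : ℝ × ℝ | dist p.1 p.2 ≤ r p.2}.indicator (fun p => w p.2) (x, y) :=
        lintegral_congr fun x =>
          (lintegral_indicator (measurableSet_le (measurable_const.dist measurable_id) hr) w).symm
    _ = ∫⁻ y, ∫⁻ x, {p : ℝ × ℝ | dist p.1 p.2 ≤ r p.2}.indicator (fun p => w p.2) (x, y) :=
        lintegral_lintegral_swap ((hw.comp measurable_snd).indicator hA).aemeasurable
    _ = ∫⁻ y, ENNReal.ofReal (2 * r y) * w y := by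
        refine lintegral_congr fun y => ?_
        rw [← Real.volume_closedBall y, mul_comm,
          ← lintegral_indicator_const measurableSet_closedBall]
        rfl

theorem lintegral_pi_le_of_forall_lintegral_update_le {δ : Type*} [Fintype δ] [DecidableEq δ]
    {X : δ → Type*} [∀ i, MeasurableSpace (X i)] {μ : ∀ i, Measure (X i)}
    [∀ i, SigmaFinite (μ i)] (i : δ) {f g : (∀ i, X i) → ℝ≥0∞} (hf : Measurable f)
    (hg : Measurable g) {K : ℝ≥0∞}
    (hfg : ∀ x, ∫⁻ t, f (Function.update x i t) ∂μ i ≤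
      K * ∫⁻ t, g (Function.update x i t) ∂μ i) :
    ∫⁻ x, f x ∂Measure.pi μ ≤ K * ∫⁻ x, g x ∂Measure.pi μ := by
  rw [← lintegral_const_mul K hg]
  refine lintegral_le_of_lmarginal_le {i} hf (hg.const_mul K) fun x => ?_
  simp only [lmarginal_singleton]
  exact (hfg x).trans_eq (lintegral_const_mul K (hg.comp (measurable_update x))).symm

lemma HolderOnWith.of_dist_le {X Y : Type*} [PseudoMetricSpace X] [PseudoMetricSpace Y]
    {f : X → Y} {s : Set X} {C : ℝ} {r : ℝ≥0} (hC : 0 ≤ C)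
    (hf : ∀ x ∈ s, ∀ y ∈ s, dist (f x) (f y) ≤ C * dist x y ^ (r : ℝ)) :
    HolderOnWith C.toNNReal r f s := fun x hx y hy => by
  rw [edist_dist, edist_dist, ENNReal.ofReal_rpow_of_nonneg dist_nonneg r.coe_nonneg,
    ← ENNReal.ofReal.eq_def, ← ENNReal.ofReal_mul hC]
  exact ENNReal.ofReal_le_ofReal (hf x hx y hy)

theorem measurable_gradient {E : Type*} [NormedAddCommGroup E] [InnerProductSpace ℝ E]
    [CompleteSpace E] [MeasurableSpace E] [BorelSpace E] (f : E → ℝ) :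
    Measurable (gradient f) :=
  (InnerProductSpace.toDual ℝ E).symm.continuous.measurable.comp (measurable_fderiv ℝ f)

section Real

variable {I : Set ℝ} {h : ℝ → ℝ} {B : ℝ≥0}

lemma abs_deriv_sub_le_half (hB : 0 < B) (hHol : HolderOnWith B (1 / 2) (deriv h) I) {x y : ℝ}
    (hx : x ∈ I) (hy : y ∈ I) (hxy : dist y x ≤ (deriv h x / (2 * B)) ^ 2) :
    |deriv h y - deriv h x| ≤ |deriv h x| / 2 := by
  have hB' : (0 : ℝ) < B := hB
  calc |deriv h y - deriv h x| ≤ B * ((deriv h x / (2 * B)) ^ 2) ^ ((1 / 2 : ℝ≥0) : ℝ) :=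
        hHol.dist_le_of_le hy hx hxy
    _ = |deriv h x| / 2 := by
        rw [NNReal.coe_div, NNReal.coe_one, NNReal.coe_two, ← Real.sqrt_eq_rpow,
          Real.sqrt_sq_eq_abs, abs_div, abs_of_pos (by positivity : (0 : ℝ) < 2 * B)]
        field_simp

lemma abs_deriv_mem_Icc_of_dist_le (hB : 0 < B) (hHol : HolderOnWith B (1 / 2) (deriv h) I)
    {x y : ℝ} (hx : x ∈ I) (hy : y ∈ I) (hxy : dist y x ≤ (deriv h x / (2 * B)) ^ 2) :
    |deriv h y| ∈ Icc (|deriv h x| / 2) (3 * |deriv h x| / 2) := by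
  have := abs_deriv_sub_le_half hB hHol hx hy hxy
  constructor <;> linarith [abs_sub_abs_le_abs_sub (deriv h y) (deriv h x),
    abs_sub_abs_le_abs_sub (deriv h x) (deriv h y), abs_sub_comm (deriv h x) (deriv h y)]

lemma exists_Ioo_subset_of_deriv_ne_zero (hI : IsOpen I) (hB : 0 < B) (hc : Continuous h)
    (h0 : ∀ x ∉ I, h x = 0) (hHol : HolderOnWith B (1 / 2) (deriv h) I) {x : ℝ} (hx : x ∈ I)
    (hx' : deriv h x ≠ 0) :
    ∃ a, x ∈ Icc a (a + (deriv h x / (2 * B)) ^ 2) ∧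
      Ioo a (a + (deriv h x / (2 * B)) ^ 2) ⊆ I := by
  set ρ := (deriv h x / (2 * B)) ^ 2
  have hρ : 0 < ρ := by positivity
  by_contra! hcon
  obtain ⟨t₂, ht₂, ht₂I⟩ := not_subset.1 (hcon x ⟨le_rfl, by linarith⟩)
  obtain ⟨t₁, ht₁, ht₁I⟩ := not_subset.1 (hcon (x - ρ) ⟨by linarith, by linarith⟩)
  obtain ⟨T₂, hT₂, hT₂I, hxT₂⟩ := hI.exists_Ico_subset_of_notMem hx ht₂I ht₂.1.le
  obtain ⟨T₁, hT₁, hT₁I, hT₁x⟩ := hI.exists_Ioc_subset_of_notMem hx ht₁I (by linarith [ht₁.2])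
  -- `h` vanishes at both exit points, so Rolle gives a critical point near `x` inside `I`.
  obtain ⟨ξ, hξ, hξ0⟩ := exists_deriv_eq_zero (hT₁.2.trans hT₂.1) hc.continuousOn
    ((h0 _ hT₁I).trans (h0 _ hT₂I).symm)
  have hξI : ξ ∈ I := by
    rcases le_or_gt ξ x with hξx | hξx
    exacts [hT₁x ⟨hξ.1, hξx⟩, hxT₂ ⟨hξx.le, hξ.2⟩]
  have hξx : dist ξ x ≤ ρ := by
    rw [Real.dist_eq, abs_le]
    constructor <;> linarith [hξ.1, hξ.2, hT₁.1, hT₂.2, ht₁.1, ht₂.2]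
  have := (abs_deriv_mem_Icc_of_dist_le hB hHol hx hξI hξx).1
  rw [hξ0, abs_zero] at this
  exact hx' (abs_eq_zero.1 (by linarith [abs_nonneg (deriv h x)]))

lemma exists_Ioo_subset_le_abs (hI : IsOpen I) (hB : 0 < B) (hc : Continuous h)
    (h0 : ∀ x ∉ I, h x = 0) (hd : ∀ x ∈ I, DifferentiableAt ℝ h x)
    (hHol : HolderOnWith B (1 / 2) (deriv h) I) {x : ℝ} (hx : x ∈ I) (hx' : deriv h x ≠ 0) :
    ∃ c, Ioo c (c + (deriv h x / (2 * B)) ^ 2 / 4) ⊆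
        I ∩ closedBall x ((deriv h x / (2 * B)) ^ 2) ∧
      ∀ y ∈ Ioo c (c + (deriv h x / (2 * B)) ^ 2 / 4),
        |deriv h x| * (deriv h x / (2 * B)) ^ 2 / 8 ≤ |h y| := by
  set ρ := (deriv h x / (2 * B)) ^ 2
  obtain ⟨a, hxa, haI⟩ := exists_Ioo_subset_of_deriv_ne_zero hI hB hc h0 hHol hx hx'
  have hball : Ioo a (a + ρ) ⊆ closedBall x ρ := fun y hy => by
    rw [mem_closedBall, Real.dist_eq, abs_le]
    constructor <;> linarith [hy.1, hy.2, hxa.1, hxa.2]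
  -- Multiplying by `deriv h x` makes the function increasing, whatever the sign of `deriv h x`.
  have hderiv : ∀ y ∈ Ioo a (a + ρ),
      deriv h x ^ 2 / 2 ≤ deriv (fun y => deriv h x * h y) y := fun y hy => by
    rw [deriv_const_mul _ (hd y (haI hy))]
    have hclose := abs_deriv_sub_le_half hB hHol hx (haI hy) (hball hy)
    have hprod := neg_abs_le (deriv h x * (deriv h y - deriv h x))
    rw [abs_mul] at hprod
    nlinarith [mul_le_mul_of_nonneg_left hclose (abs_nonneg (deriv h x)), sq_abs (deriv h x)]
  obtain ⟨c, hc_sub, hc_le⟩ := exists_Ioo_le_abs_of_le_deriv (f := fun y => deriv h x * h y)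
    (by positivity) (by positivity) (continuous_const.mul hc).continuousOn
    (fun y hy => ((hd y (haI hy)).const_mul _).differentiableWithinAt) hderiv
  refine ⟨c, fun y hy => ⟨haI (hc_sub hy), hball (hc_sub hy)⟩, fun y hy => ?_⟩
  have := hc_le y hy
  rw [abs_mul, ← sq_abs] at this
  have hpos : 0 < |deriv h x| := abs_pos.2 hx'
  nlinarith

lemma ofReal_deriv_pow_six_le (hI : IsOpen I) (hB : 0 < B) (hc : Continuous h)
    (h0 : ∀ x ∉ I, h x = 0) (hd : ∀ x ∈ I, DifferentiableAt ℝ h x)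
    (hHol : HolderOnWith B (1 / 2) (deriv h) I) {x : ℝ} (hx : x ∈ I) :
    ENNReal.ofReal (deriv h x ^ 6) ≤ ENNReal.ofReal (36864 * B ^ 6) *
      ∫⁻ y in {y | dist x y ≤ deriv h y ^ 2 / B ^ 2}, ENNReal.ofReal (h y ^ 2 / deriv h y ^ 2) := by
  rcases eq_or_ne (deriv h x) 0 with hx' | hx'
  · simp [hx']
  obtain ⟨c, hcI, hc_le⟩ := exists_Ioo_subset_le_abs hI hB hc h0 hd hHol hx hx'
  set ρ := (deriv h x / (2 * B)) ^ 2
  have hρ : ρ = |deriv h x| ^ 2 / (4 * B ^ 2) := by rw [sq_abs]; ring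
  have hderiv : ∀ y ∈ Ioo c (c + ρ / 4),
      |deriv h y| ∈ Icc (|deriv h x| / 2) (3 * |deriv h x| / 2) :=
    fun y hy => abs_deriv_mem_Icc_of_dist_le hB hHol hx (hcI hy).1 (hcI hy).2
  have hsub : Ioo c (c + ρ / 4) ⊆ {y | dist x y ≤ deriv h y ^ 2 / B ^ 2} := fun y hy => by
    have hxy : dist x y ≤ ρ := by rw [dist_comm]; exact (hcI hy).2
    rw [mem_ofPred_eq, ← sq_abs (deriv h y)]
    calc dist x y ≤ (|deriv h x| / 2) ^ 2 / B ^ 2 := by rw [hρ] at hxy; convert hxy using 1; ring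
      _ ≤ |deriv h y| ^ 2 / B ^ 2 := by gcongr; exact (hderiv y hy).1
  have hval : ∀ y ∈ Ioo c (c + ρ / 4),
      ENNReal.ofReal (ρ ^ 2 / 144) ≤ ENNReal.ofReal (h y ^ 2 / deriv h y ^ 2) := fun y hy => by
    obtain ⟨hlo, hhi⟩ := hderiv y hy
    have hpos : 0 < |deriv h y| := by linarith [abs_pos.2 hx']
    apply ENNReal.ofReal_le_ofReal
    rw [← sq_abs (h y), ← sq_abs (deriv h y), le_div_iff₀ (by positivity)]
    calc ρ ^ 2 / 144 * |deriv h y| ^ 2 ≤ ρ ^ 2 / 144 * (3 * |deriv h x| / 2) ^ 2 := by gcongr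
      _ = (|deriv h x| * ρ / 8) ^ 2 := by ring
      _ ≤ |h y| ^ 2 := by gcongr; exact hc_le y hy
  calc ENNReal.ofReal (deriv h x ^ 6)
      = ENNReal.ofReal (36864 * B ^ 6) *
          (ENNReal.ofReal (ρ ^ 2 / 144) * volume (Ioo c (c + ρ / 4))) := by
        rw [Real.volume_Ioo, add_sub_cancel_left, ← ENNReal.ofReal_mul (by positivity),
          ← ENNReal.ofReal_mul (by positivity)]
        congr 1
        simp only [ρ]
        field_simp
        ring
    _ = ENNReal.ofReal (36864 * B ^ 6) *
          ∫⁻ _ in Ioo c (c + ρ / 4), ENNReal.ofReal (ρ ^ 2 / 144) := by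
        rw [setLIntegral_const]
    _ ≤ ENNReal.ofReal (36864 * B ^ 6) *
          ∫⁻ y in {y | dist x y ≤ deriv h y ^ 2 / B ^ 2},
            ENNReal.ofReal (h y ^ 2 / deriv h y ^ 2) :=
        mul_le_mul_of_nonneg_left
          ((setLIntegral_mono' measurableSet_Ioo hval).trans (lintegral_mono_set hsub)) zero_le

theorem lintegral_deriv_pow_six_le (hI : IsOpen I) (hB : 0 < B) (hc : Continuous h)
    (h0 : ∀ x ∉ I, h x = 0) (hd : ∀ x ∈ I, DifferentiableAt ℝ h x)
    (hHol : HolderOnWith B (1 / 2) (deriv h) I) :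
    ∫⁻ x in I, ENNReal.ofReal (deriv h x ^ 6) ≤
      ENNReal.ofReal (73728 * B ^ 4) * ∫⁻ x, ENNReal.ofReal (h x ^ 2) := by
  have hB' : (0 : ℝ) < B := hB
  have hw : Measurable fun y => ENNReal.ofReal (h y ^ 2 / deriv h y ^ 2) :=
    ((hc.measurable.pow_const 2).div ((measurable_deriv h).pow_const 2)).ennreal_ofReal
  have hker : ∀ y, ENNReal.ofReal (2 * (deriv h y ^ 2 / B ^ 2)) *
      ENNReal.ofReal (h y ^ 2 / deriv h y ^ 2) ≤
        ENNReal.ofReal (2 / B ^ 2) * ENNReal.ofReal (h y ^ 2) := fun y => by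
    rw [← ENNReal.ofReal_mul (by positivity), ← ENNReal.ofReal_mul (by positivity)]
    apply ENNReal.ofReal_le_ofReal
    calc 2 * (deriv h y ^ 2 / B ^ 2) * (h y ^ 2 / deriv h y ^ 2)
        = 2 / B ^ 2 * h y ^ 2 * (deriv h y ^ 2 / deriv h y ^ 2) := by ring
      _ ≤ 2 / B ^ 2 * h y ^ 2 := mul_le_of_le_one_right (by positivity) (div_self_le_one _)
  calc ∫⁻ x in I, ENNReal.ofReal (deriv h x ^ 6)
      ≤ ∫⁻ x in I, ENNReal.ofReal (36864 * B ^ 6) *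
          ∫⁻ y in {y | dist x y ≤ deriv h y ^ 2 / B ^ 2},
            ENNReal.ofReal (h y ^ 2 / deriv h y ^ 2) :=
        setLIntegral_mono' hI.measurableSet fun x hx =>
          ofReal_deriv_pow_six_le hI hB hc h0 hd hHol hx
    _ ≤ ENNReal.ofReal (36864 * B ^ 6) * ∫⁻ x,
          ∫⁻ y in {y | dist x y ≤ deriv h y ^ 2 / B ^ 2},
            ENNReal.ofReal (h y ^ 2 / deriv h y ^ 2) := by
        rw [← lintegral_const_mul' _ _ ENNReal.ofReal_ne_top]
        exact setLIntegral_le_lintegral _ _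
    _ = ENNReal.ofReal (36864 * B ^ 6) * ∫⁻ y, ENNReal.ofReal (2 * (deriv h y ^ 2 / B ^ 2)) *
          ENNReal.ofReal (h y ^ 2 / deriv h y ^ 2) := by
        rw [lintegral_setLIntegral_dist_le_eq (((measurable_deriv h).pow_const 2).div_const _) hw]
    _ ≤ ENNReal.ofReal (36864 * B ^ 6) *
          ∫⁻ y, ENNReal.ofReal (2 / B ^ 2) * ENNReal.ofReal (h y ^ 2) :=
        mul_le_mul_of_nonneg_left (lintegral_mono hker) zero_le
    _ = ENNReal.ofReal (73728 * B ^ 4) * ∫⁻ x, ENNReal.ofReal (h x ^ 2) := by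
        rw [lintegral_const_mul' _ _ ENNReal.ofReal_ne_top, ← mul_assoc,
          ← ENNReal.ofReal_mul (by positivity)]
        congr 2
        field_simp
        ring

end Real

namespace EuclideanSpace

variable {ι : Type*}

lemma toLp_update [DecidableEq ι] (x : EuclideanSpace ℝ ι) (i : ι) (t : ℝ) :
    WithLp.toLp 2 (Function.update x.ofLp i (x i + t)) = x + t • single i 1 := by
  ext j
  rcases eq_or_ne j i with rfl | hj <;> simp [*, add_comm]

lemma isometry_add_smul_single [Fintype ι] [DecidableEq ι] (x : EuclideanSpace ℝ ι) (i : ι) :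
    Isometry fun t : ℝ => x + t • single i (1 : ℝ) :=
  Isometry.of_dist_eq fun t s => by
    rw [dist_add_left, dist_eq_norm, ← sub_smul, norm_smul, PiLp.norm_single, norm_one, mul_one,
      Real.dist_eq, Real.norm_eq_abs]

theorem lintegral_le_of_forall_lintegral_line_le [Fintype ι] [DecidableEq ι] (i : ι)
    {f g : EuclideanSpace ℝ ι → ℝ≥0∞} (hf : Measurable f) (hg : Measurable g) {K : ℝ≥0∞}
    (hfg : ∀ x, ∫⁻ t : ℝ, f (x + t • single i 1) ≤ K * ∫⁻ t : ℝ, g (x + t • single i 1)) :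
    ∫⁻ x, f x ≤ K * ∫⁻ x, g x := by
  have hline : ∀ (F : EuclideanSpace ℝ ι → ℝ≥0∞) (v : ι → ℝ),
      ∫⁻ t, F (WithLp.toLp 2 (Function.update v i t)) =
        ∫⁻ t : ℝ, F (WithLp.toLp 2 v + t • single i 1) := fun F v => by
    have hv : ∀ t : ℝ, WithLp.toLp 2 v + t • single i (1 : ℝ) =
        WithLp.toLp 2 (Function.update v i (v i + t)) := fun t => (toLp_update _ i t).symm
    simp_rw [hv]
    exact (lintegral_add_left_eq_self (μ := volume)
      (fun t => F (WithLp.toLp 2 (Function.update v i t))) (v i)).symm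
  rw [← (PiLp.volume_preserving_toLp ι).lintegral_comp hf,
    ← (PiLp.volume_preserving_toLp ι).lintegral_comp hg]
  refine lintegral_pi_le_of_forall_lintegral_update_le i
    (hf.comp (PiLp.volume_preserving_toLp ι).measurable)
    (hg.comp (PiLp.volume_preserving_toLp ι).measurable) fun v => ?_
  simp only [Function.comp, hline]
  exact hfg _

lemma norm_pow_six_le [Fintype ι] (u : EuclideanSpace ℝ ι) :
    ‖u‖ ^ 6 ≤ (Fintype.card ι : ℝ) ^ 2 * ∑ i, u i ^ 6 := by
  have := pow_sum_le_card_mul_sum_pow (s := Finset.univ) (f := fun i => u i ^ 2)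
    (fun i _ => sq_nonneg _) 2
  simp only [Finset.card_univ, ← pow_mul] at this
  rw [show ‖u‖ ^ 6 = (‖u‖ ^ 2) ^ 3 by ring, EuclideanSpace.norm_sq_eq]
  simpa only [Real.norm_eq_abs, sq_abs] using this

lemma setLIntegral_norm_pow_six_le [Fintype ι] (s : Set (EuclideanSpace ℝ ι))
    {v : EuclideanSpace ℝ ι → EuclideanSpace ℝ ι} (hv : Measurable v) :
    ∫⁻ x in s, ENNReal.ofReal (‖v x‖ ^ 6) ≤
      ENNReal.ofReal ((Fintype.card ι : ℝ) ^ 2) * ∑ i, ∫⁻ x in s, ENNReal.ofReal (v x i ^ 6) := by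
  rw [← lintegral_finsetSum (f := fun i x => ENNReal.ofReal (v x i ^ 6)) _ fun i _ =>
      (((PiLp.continuous_apply 2 _ i).measurable.comp hv).pow_const 6).ennreal_ofReal,
    ← lintegral_const_mul' _ _ ENNReal.ofReal_ne_top]
  refine lintegral_mono fun x => ?_
  rw [← ENNReal.ofReal_sum_of_nonneg fun i _ => by positivity,
    ← ENNReal.ofReal_mul (by positivity)]
  exact ENNReal.ofReal_le_ofReal (norm_pow_six_le (v x))

theorem lintegral_gradient_apply_pow_six_le [Fintype ι] [DecidableEq ι]
    {S : Set (EuclideanSpace ℝ ι)} {g : EuclideanSpace ℝ ι → ℝ} {B : ℝ≥0} (i : ι) (hS : IsOpen S)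
    (hB : 0 < B)
    (hc : Continuous g) (h0 : ∀ x ∉ S, g x = 0) (hd : ∀ x ∈ S, DifferentiableAt ℝ g x)
    (hHol : HolderOnWith B (1 / 2) (gradient g) S) :
    ∫⁻ x in S, ENNReal.ofReal (gradient g x i ^ 6) ≤
      ENNReal.ofReal (73728 * B ^ 4) * ∫⁻ x, ENNReal.ofReal (g x ^ 2) := by
  have hgrad : Measurable fun x => gradient g x i :=
    (PiLp.continuous_apply 2 _ i).measurable.comp (measurable_gradient g)
  rw [← lintegral_indicator hS.measurableSet]
  refine lintegral_le_of_forall_lintegral_line_le i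
    ((hgrad.pow_const 6).ennreal_ofReal.indicator hS.measurableSet)
    (hc.measurable.pow_const 2).ennreal_ofReal fun x => ?_
  set P : ℝ → EuclideanSpace ℝ ι := fun t => x + t • single i (1 : ℝ)
  have hP : Isometry P := isometry_add_smul_single x i
  have hderiv : ∀ t ∈ P ⁻¹' S, HasDerivAt (g ∘ P) (gradient g (P t) i) t := fun t ht => by
    have := (hd _ ht).hasFDerivAt.comp_hasDerivAt t
      (((hasDerivAt_id t).smul_const (single i (1 : ℝ))).const_add x)
    simpa [← inner_gradient_left, inner_single_right] using this
  have hHol' : HolderOnWith B (1 / 2) (deriv (g ∘ P)) (P ⁻¹' S) := fun t ht s hs => by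
    rw [(hderiv t ht).deriv, (hderiv s hs).deriv, ← hP.edist_eq t s]
    exact (PiLp.edist_apply_le _ _ i).trans (hHol _ ht _ hs)
  have hI : MeasurableSet (P ⁻¹' S) := (hS.preimage hP.continuous).measurableSet
  calc ∫⁻ t : ℝ, S.indicator (fun y => ENNReal.ofReal (gradient g y i ^ 6)) (P t)
      = ∫⁻ t in P ⁻¹' S, ENNReal.ofReal (deriv (g ∘ P) t ^ 6) := by
        rw [← lintegral_indicator hI]
        refine lintegral_congr fun t => ?_
        by_cases ht : P t ∈ S
        · rw [indicator_of_mem ht, indicator_of_mem (show t ∈ P ⁻¹' S from ht),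
            (hderiv t ht).deriv]
        · rw [indicator_of_notMem ht, indicator_of_notMem (show t ∉ P ⁻¹' S from ht)]
    _ ≤ _ := lintegral_deriv_pow_six_le (hS.preimage hP.continuous) hB (hc.comp hP.continuous)
        (fun t ht => h0 _ ht) (fun t ht => (hderiv t ht).differentiableAt) hHol'

theorem setLIntegral_norm_gradient_pow_six_le [Fintype ι] [DecidableEq ι]
    {S : Set (EuclideanSpace ℝ ι)} {g : EuclideanSpace ℝ ι → ℝ} {B : ℝ≥0} (hS : IsOpen S)
    (hB : 0 < B) (hgc : ContinuousOn g (closure S)) (hgd : ∀ x ∈ S, DifferentiableAt ℝ g x)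
    (hg0 : ∀ x ∈ frontier S, g x = 0) (hHol : HolderOnWith B (1 / 2) (gradient g) S) :
    ∫⁻ x in S, ENNReal.ofReal (‖gradient g x‖ ^ 6) ≤
      ENNReal.ofReal (73728 * Fintype.card ι ^ 3 * B ^ 4) *
        ∫⁻ x in S, ENNReal.ofReal (g x ^ 2) := by
  set G := S.indicator g
  have hGg : ∀ x ∈ S, G =ᶠ[nhds x] g := fun x hx =>
    Filter.eventuallyEq_of_mem (hS.mem_nhds hx) fun y hy => indicator_of_mem hy g
  have hgrad : ∀ x ∈ S, gradient G x = gradient g x := fun x hx => (hGg x hx).gradient_eq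
  have hHolG : HolderOnWith B (1 / 2) (gradient G) S := fun x hx y hy => by
    rw [hgrad x hx, hgrad y hy]
    exact hHol x hx y hy
  have hG2 : ∫⁻ x, ENNReal.ofReal (G x ^ 2) = ∫⁻ x in S, ENNReal.ofReal (g x ^ 2) := by
    rw [← lintegral_indicator hS.measurableSet]
    exact lintegral_congr fun x => (congrFun (indicator_comp_of_zero
      (g := fun y : ℝ => ENNReal.ofReal (y ^ 2)) (by simp)) x).symm
  calc ∫⁻ x in S, ENNReal.ofReal (‖gradient g x‖ ^ 6)
      = ∫⁻ x in S, ENNReal.ofReal (‖gradient G x‖ ^ 6) :=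
        setLIntegral_congr_fun hS.measurableSet fun x hx => by rw [hgrad x hx]
    _ ≤ ENNReal.ofReal ((Fintype.card ι : ℝ) ^ 2) *
          ∑ i, ∫⁻ x in S, ENNReal.ofReal (gradient G x i ^ 6) :=
        setLIntegral_norm_pow_six_le S (measurable_gradient G)
    _ ≤ ENNReal.ofReal ((Fintype.card ι : ℝ) ^ 2) *
          ∑ _i : ι, ENNReal.ofReal (73728 * B ^ 4) * ∫⁻ x in S, ENNReal.ofReal (g x ^ 2) := by
        gcongr with i
        rw [← hG2]
        exact lintegral_gradient_apply_pow_six_le i hS hB (continuous_indicator hg0 hgc)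
          (fun x hx => indicator_of_notMem hx g)
          (fun x hx => (hgd x hx).congr_of_eventuallyEq (hGg x hx)) hHolG
    _ = ENNReal.ofReal (73728 * Fintype.card ι ^ 3 * B ^ 4) *
          ∫⁻ x in S, ENNReal.ofReal (g x ^ 2) := by
        rw [Finset.sum_const, Finset.card_univ, nsmul_eq_mul, ← ENNReal.ofReal_natCast,
          ← mul_assoc, ← mul_assoc, ← ENNReal.ofReal_mul (by positivity),
          ← ENNReal.ofReal_mul (by positivity)]
        congr 2
        ring

end EuclideanSpace

/-- Let `n ≥ 1`. There is a constant `C`, depending only on `n`, such that for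
every bounded open set `S ⊆ ℝⁿ` and every `g` continuous on `closure S`, differentiable at every
point of `S`, vanishing on the boundary of `S`, with `∫_S g² ≤ D` and `|∇g(x) − ∇g(y)| ≤
B·|x−y|^{1/2}` on `S` (for constants `B, D > 0`), one has `∫_S |∇g|⁶ ≤ C·B⁴·D`. -/
theorem statement0 (n : ℕ) (hn : 1 ≤ n) :
    ∃ C : ℝ, 0 < C ∧
      ∀ (S : Set (EuclideanSpace ℝ (Fin n))) (g : EuclideanSpace ℝ (Fin n) → ℝ) (B D : ℝ),
        IsOpen S → Bornology.IsBounded S →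
        ContinuousOn g (closure S) →
        (∀ x ∈ S, DifferentiableAt ℝ g x) →
        (∀ x ∈ frontier S, g x = 0) →
        0 < B → 0 < D →
        (∫⁻ x in S, ENNReal.ofReal (g x ^ 2)) ≤ ENNReal.ofReal D →
        (∀ x ∈ S, ∀ y ∈ S, ‖gradient g x - gradient g y‖ ≤ B * ‖x - y‖ ^ (1/2 : ℝ)) →
        (∫⁻ x in S, ENNReal.ofReal (‖gradient g x‖ ^ 6)) ≤ ENNReal.ofReal (C * B ^ 4 * D) := by
  refine ⟨73728 * n ^ 3, by positivity, ?_⟩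
  intro S g B D hS _ hgc hgd hg0 hB _ hL2 hHol
  have hHol' : HolderOnWith B.toNNReal (1 / 2) (gradient g) S :=
    HolderOnWith.of_dist_le hB.le fun x hx y hy => by
      simpa [dist_eq_norm] using hHol x hx y hy
  calc ∫⁻ x in S, ENNReal.ofReal (‖gradient g x‖ ^ 6)
      ≤ ENNReal.ofReal (73728 * n ^ 3 * B ^ 4) * ∫⁻ x in S, ENNReal.ofReal (g x ^ 2) := by
        simpa [Real.coe_toNNReal B hB.le] using
          EuclideanSpace.setLIntegral_norm_gradient_pow_six_le hS (Real.toNNReal_pos.2 hB) hgc hgd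
            hg0 hHol'
    _ ≤ ENNReal.ofReal (73728 * n ^ 3 * B ^ 4) * ENNReal.ofReal D := by gcongr
    _ = ENNReal.ofReal (73728 * n ^ 3 * B ^ 4 * D) := by rw [← ENNReal.ofReal_mul (by positivity)]
end

section
/- Let n ≥ 1. There exist constants c₀ ∈ (0,1) and c₁ > 0, depending only on n, with the following property. Let x₀ ∈ ℝⁿ, r > 0, and let g : B(x₀,r) → ℝ be differentiable on the open ball B(x₀,r) with g(x₀) ≥ 0, ∇g(x₀) ≠ 0, and |∇g(y) − ∇g(x₀)| ≤ c₀·|∇g(x₀)| for all y ∈ B(x₀,r). Then the open set P = { y ∈ B(x₀,r) : g(y) > 0 } satisfies: (a) the Lebesgue measure of P is at least c₁·rⁿ, and (b) ∫_P g(y)² dy ≥ c₁·r^{n+2}·|∇g(x₀)|². -/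
set_option maxHeartbeats 1000000
open MeasureTheory
open scoped ENNReal RealInnerProductSpace

/-- Let `n ≥ 1`. There are constants `c₀ ∈ (0,1)` and `c₁ > 0`, depending only
on `n`, such that: whenever `g` is differentiable on the open ball `B(x₀,r)` with `g(x₀) ≥ 0`,
`∇g(x₀) ≠ 0`, and `|∇g(y) − ∇g(x₀)| ≤ c₀·|∇g(x₀)|` on the ball, the open set
`P = {y ∈ B(x₀,r) : g(y) > 0}` has Lebesgue measure at least `c₁·rⁿ` and satisfies
`∫_P g² ≥ c₁·r^{n+2}·|∇g(x₀)|²`. -/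
theorem statement1 (n : ℕ) (hn : 1 ≤ n) :
    ∃ c₀ c₁ : ℝ, 0 < c₀ ∧ c₀ < 1 ∧ 0 < c₁ ∧
      ∀ (x₀ : EuclideanSpace ℝ (Fin n)) (r : ℝ) (g : EuclideanSpace ℝ (Fin n) → ℝ),
        0 < r →
        (∀ y ∈ Metric.ball x₀ r, DifferentiableAt ℝ g y) →
        0 ≤ g x₀ →
        gradient g x₀ ≠ 0 →
        (∀ y ∈ Metric.ball x₀ r, ‖gradient g y - gradient g x₀‖ ≤ c₀ * ‖gradient g x₀‖) →
        ENNReal.ofReal (c₁ * r ^ n) ≤ volume {y ∈ Metric.ball x₀ r | 0 < g y} ∧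
          ENNReal.ofReal (c₁ * r ^ (n + 2) * ‖gradient g x₀‖ ^ 2) ≤
            ∫⁻ y in {y ∈ Metric.ball x₀ r | 0 < g y}, ENNReal.ofReal (g y ^ 2) := by
  classical
  set E := EuclideanSpace ℝ (Fin n)
  set ω : ℝ := (volume (Metric.ball (0 : E) 1)).toReal with hω
  have hωfin : volume (Metric.ball (0 : E) 1) ≠ ⊤ := measure_ball_lt_top.ne
  have hωpos : 0 < ω := ENNReal.toReal_pos (Metric.measure_ball_pos volume 0 one_pos).ne' hωfin
  have hωeq : volume (Metric.ball (0 : E) 1) = ENNReal.ofReal ω :=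
    (ENNReal.ofReal_toReal hωfin).symm
  refine ⟨1/2, ω / (8 ^ n * 256), by norm_num, by norm_num,
    div_pos hωpos (by positivity), ?_⟩
  intro x₀ r g hr hdiff hg0 hgrad hbound
  set φ := gradient g x₀ with hφ
  have hφpos : 0 < ‖φ‖ := norm_pos_iff.mpr hgrad
  -- mean value estimate:  g y ≥ g x₀ + ⟪φ, y - x₀⟫ - (1/2)‖φ‖‖y - x₀‖  on the ball
  have key : ∀ y ∈ Metric.ball x₀ r,
      g x₀ + ⟪φ, y - x₀⟫ - (1/2) * ‖φ‖ * ‖y - x₀‖ ≤ g y := by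
    intro y hy
    set L := InnerProductSpace.toDual ℝ E φ with hL
    have hLf : fderiv ℝ g x₀ = L := by
      rw [hL, hφ, gradient, LinearIsometryEquiv.apply_symm_apply]
    set f : E → ℝ := fun z => g z - L z with hf
    have hdf : ∀ z ∈ Metric.ball x₀ r, DifferentiableAt ℝ f z := fun z hz =>
      ((hdiff z hz).sub (L.differentiableAt))
    have hfder : ∀ z ∈ Metric.ball x₀ r, ‖fderiv ℝ f z‖ ≤ (1/2) * ‖φ‖ := by
      intro z hz
      have : fderiv ℝ f z = fderiv ℝ g z - L := by
        rw [hf]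
        rw [fderiv_fun_sub (hdiff z hz) L.differentiableAt, L.fderiv]
      rw [this, ← hLf]
      have h1 : fderiv ℝ g z - fderiv ℝ g x₀ =
          InnerProductSpace.toDual ℝ E (gradient g z - gradient g x₀) := by
        rw [map_sub, gradient, gradient, LinearIsometryEquiv.apply_symm_apply,
          LinearIsometryEquiv.apply_symm_apply]
      rw [h1, LinearIsometryEquiv.norm_map]
      exact hbound z hz
    have hx₀ : x₀ ∈ Metric.ball x₀ r := Metric.mem_ball_self hr
    have := (convex_ball x₀ r).norm_image_sub_le_of_norm_fderiv_le hdf hfder hx₀ hy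
    have habs : |f y - f x₀| ≤ (1/2) * ‖φ‖ * ‖y - x₀‖ := this
    have hLy : L y - L x₀ = ⟪φ, y - x₀⟫ := by
      rw [hL, InnerProductSpace.toDual_apply_apply, InnerProductSpace.toDual_apply_apply,
        inner_sub_right]
    have hfy : f y - f x₀ = g y - g x₀ - ⟪φ, y - x₀⟫ := by
      rw [hf]; simp only [← hLy]; ring
    have := (abs_le.mp habs).1
    rw [hfy] at this
    linarith
  -- the sector: a small ball around  z := x₀ + (r/(2‖φ‖)) • φ
  set z : E := x₀ + (r / (2 * ‖φ‖)) • φ with hz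
  have hzsub : ∀ y ∈ Metric.ball z (r/8), y ∈ Metric.ball x₀ r ∧ r * ‖φ‖ / 16 ≤ g y := by
    intro y hy
    have hyz : ‖y - z‖ < r/8 := by
      rw [← dist_eq_norm]; exact hy
    have hzx : ‖z - x₀‖ = r/2 := by
      rw [hz, add_sub_cancel_left, norm_smul, Real.norm_eq_abs,
        abs_of_pos (by positivity)]
      field_simp
    have hyx : ‖y - x₀‖ ≤ 5 * r / 8 := by
      calc ‖y - x₀‖ = ‖(y - z) + (z - x₀)‖ := by rw [sub_add_sub_cancel]
        _ ≤ ‖y - z‖ + ‖z - x₀‖ := norm_add_le _ _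
        _ ≤ r/8 + r/2 := by rw [hzx]; linarith
        _ = 5 * r / 8 := by ring
    have hymem : y ∈ Metric.ball x₀ r := by
      rw [Metric.mem_ball, dist_eq_norm]
      linarith
    refine ⟨hymem, ?_⟩
    have hinner1 : ⟪φ, z - x₀⟫ = (r/2) * ‖φ‖ := by
      rw [hz, add_sub_cancel_left, real_inner_smul_right, real_inner_self_eq_norm_sq]
      field_simp
    have hinner2 : |⟪φ, y - z⟫| ≤ ‖φ‖ * (r/8) :=
      (abs_real_inner_le_norm φ (y - z)).trans
        (by have := hyz.le; nlinarith [hφpos.le])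
    have hinner : (r/2) * ‖φ‖ - ‖φ‖ * (r/8) ≤ ⟪φ, y - x₀⟫ := by
      have hsplit : ⟪φ, y - x₀⟫ = ⟪φ, y - z⟫ + ⟪φ, z - x₀⟫ := by
        rw [← inner_add_right, sub_add_sub_cancel]
      rw [hsplit, hinner1]
      have := (abs_le.mp hinner2).1
      linarith
    have hk := key y hymem
    have hN : (1/2) * ‖φ‖ * ‖y - x₀‖ ≤ (1/2) * ‖φ‖ * (5 * r / 8) := by
      apply mul_le_mul_of_nonneg_left hyx (by positivity)
    nlinarith [hφpos.le]
  have hball_sub : Metric.ball z (r/8) ⊆ {y ∈ Metric.ball x₀ r | 0 < g y} := by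
    intro y hy
    obtain ⟨h1, h2⟩ := hzsub y hy
    exact ⟨h1, lt_of_lt_of_le (by positivity) h2⟩
  have hfinrank : Module.finrank ℝ E = n := finrank_euclideanSpace_fin
  have hballvol : volume (Metric.ball z (r/8)) =
      ENNReal.ofReal ((r/8) ^ n) * ENNReal.ofReal ω := by
    rw [Measure.addHaar_ball_of_pos volume z (by positivity : (0:ℝ) < r/8), hfinrank, hωeq]
  constructor
  · calc ENNReal.ofReal (ω / (8 ^ n * 256) * r ^ n)
        ≤ ENNReal.ofReal ((r/8) ^ n * ω) := by
          apply ENNReal.ofReal_le_ofReal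
          rw [div_pow]
          rw [div_mul_eq_mul_div, mul_comm, ← div_mul_eq_mul_div]
          apply mul_le_mul_of_nonneg_right _ (by positivity)
          rw [div_le_div_iff₀ (by positivity) (by positivity)]
          nlinarith [hωpos.le, pow_pos (by norm_num : (0:ℝ) < 8) n,
            pow_pos hr n]
      _ = ENNReal.ofReal ((r/8) ^ n) * ENNReal.ofReal ω := by
          rw [ENNReal.ofReal_mul (by positivity)]
      _ = volume (Metric.ball z (r/8)) := hballvol.symm
      _ ≤ volume {y ∈ Metric.ball x₀ r | 0 < g y} := measure_mono hball_sub
  · calc ENNReal.ofReal (ω / (8 ^ n * 256) * r ^ (n + 2) * ‖φ‖ ^ 2)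
        = ENNReal.ofReal ((r * ‖φ‖ / 16) ^ 2 * ((r/8) ^ n * ω)) := by
          congr 1
          rw [div_pow, div_pow, pow_add]
          field_simp
          ring
      _ = ENNReal.ofReal ((r * ‖φ‖ / 16) ^ 2) *
            (ENNReal.ofReal ((r/8) ^ n) * ENNReal.ofReal ω) := by
          rw [ENNReal.ofReal_mul (by positivity), ENNReal.ofReal_mul (by positivity)]
      _ = ENNReal.ofReal ((r * ‖φ‖ / 16) ^ 2) * volume (Metric.ball z (r/8)) := by
          rw [hballvol]
      _ = ∫⁻ _ in Metric.ball z (r/8), ENNReal.ofReal ((r * ‖φ‖ / 16) ^ 2) := by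
          rw [setLIntegral_const]
      _ ≤ ∫⁻ y in Metric.ball z (r/8), ENNReal.ofReal (g y ^ 2) := by
          apply setLIntegral_mono' measurableSet_ball
          intro y hy
          apply ENNReal.ofReal_le_ofReal
          have h2 := (hzsub y hy).2
          have : (0:ℝ) ≤ r * ‖φ‖ / 16 := by positivity
          nlinarith
      _ ≤ ∫⁻ y in {y ∈ Metric.ball x₀ r | 0 < g y}, ENNReal.ofReal (g y ^ 2) :=
          lintegral_mono_set hball_sub
end

section
/- Let d ≥ 1, g ≥ 0, and let (v, p) be a smooth solution of the incompressible Euler equations with gravity g on an open set U ⊆ ℝ_t × ℝᵈ_x. Then on U one has the identity Δ(D_t p) = Σ_j (Δ v_j) ∂_j p + 4 Σ_{i,j} ∂_i ∂_j p · ∂_i v_j + 2 Σ_{i,j,k} ∂_i v_j ∂_j v_k ∂_k v_i, which can equivalently be written in divergence form as Δ(D_t p) = Σ_i ∂_i( Σ_j ∂_i v_j ∂_j p ) + 3 Σ_i ∂_i( Σ_j ∂_j p ∂_j v_i ) + 2 Σ_{i,j,k} ∂_i v_j ∂_j v_k ∂_k v_i. -/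
noncomputable section

/-- Time-space: `ℝ_t × ℝᵈ_x`. -/
abbrev Spc (d : ℕ) := ℝ × (Fin d → ℝ)

/-- The spatial partial derivative `∂ᵢ F`. -/
def pd {d : ℕ} (i : Fin d) (F : Spc d → ℝ) (z : Spc d) : ℝ :=
  fderiv ℝ F z (0, Pi.single i 1)

/-- The material derivative `D_t F = ∂_t F + v·∇F` associated with the velocity field `v`. -/
def mdt {d : ℕ} (v : Spc d → Fin d → ℝ) (F : Spc d → ℝ) (z : Spc d) : ℝ :=
  fderiv ℝ F z (1, 0) + ∑ i : Fin d, v z i * pd i F z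

/-- The spatial Laplacian `Δ F = Σᵢ ∂ᵢ∂ᵢ F`. -/
def lap {d : ℕ} (F : Spc d → ℝ) (z : Spc d) : ℝ := ∑ i : Fin d, pd i (pd i F) z

/-- `(v, p)` solves the incompressible Euler equations with gravity `g` on `U`:
`∂_t v + (v·∇)v = −∇p − g e_d` and `∇·v = 0` on `U`, `e_d` the last standard basis vector. -/
def IsEulerOn {d : ℕ} (g : ℝ) (U : Set (Spc d)) (v : Spc d → Fin d → ℝ) (p : Spc d → ℝ) :
    Prop :=
  (∀ z ∈ U, ∀ j : Fin d,
      mdt v (fun w => v w j) z = -pd j p z - (if (j : ℕ) = d - 1 then g else 0)) ∧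
    (∀ z ∈ U, ∑ i : Fin d, pd i (fun w => v w i) z = 0)

/-!
Spatial derivatives and the material derivative commute up to a first-order term,
`∂_k (D_t F) = D_t (∂_k F) + Σ_i ∂_k v_i ∂_i F`. Using this twice gives, for arbitrary smooth
`v` and `p`, `Δ(D_t p) = D_t(Δp) + Σ_j Δv_j ∂_j p + 2 Σ_{i,j} ∂_i∂_j p ∂_i v_j`.
For a solution of Euler, differentiating the momentum equation gives
`D_t(∂_j v_i) = -∂_i∂_j p - Σ_k ∂_j v_k ∂_k v_i`. Its trace, together with `∇·v = 0`, gives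
`Δp = -Σ_{i,j} ∂_i v_j ∂_j v_i`; applying `D_t` to this and using the same equation again gives
`D_t(Δp) = 2 Σ_{i,j} ∂_i∂_j p ∂_i v_j + 2 Σ_{i,j,k} ∂_i v_j ∂_j v_k ∂_k v_i`.
The divergence form follows from the product rule and `∂_j(∇·v) = 0`.
-/

open Finset Filter Topology

section FDerivApply

variable {E : Type*} [NormedAddCommGroup E] [NormedSpace ℝ E] {F G : E → ℝ} {z : E}

theorem fderiv_apply_mul (hF : DifferentiableAt ℝ F z) (hG : DifferentiableAt ℝ G z) (w : E) :
    fderiv ℝ (fun x => F x * G x) z w = fderiv ℝ F z w * G z + F z * fderiv ℝ G z w := by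
  simp only [fderiv_fun_mul hF hG, add_apply, smul_apply, smul_eq_mul]
  ring

theorem fderiv_apply_sum {ι : Type*} (s : Finset ι) {F : ι → E → ℝ}
    (hF : ∀ i ∈ s, DifferentiableAt ℝ (F i) z) (w : E) :
    fderiv ℝ (fun x => ∑ i ∈ s, F i x) z w = ∑ i ∈ s, fderiv ℝ (F i) z w := by
  simp only [fderiv_fun_sum hF, FunLike.coe_sum, Finset.sum_apply]

theorem ContDiffAt.differentiableAt_fderiv_apply (hF : ContDiffAt ℝ 2 F z) (w : E) :
    DifferentiableAt ℝ (fun x => fderiv ℝ F x w) z :=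
  ((hF.fderiv_right (m := 1) le_rfl).differentiableAt one_ne_zero).clm_apply
    (differentiableAt_const w)

theorem fderiv_fderiv_apply_comm (hF : ContDiffAt ℝ 2 F z) (a b : E) :
    fderiv ℝ (fun x => fderiv ℝ F x a) z b = fderiv ℝ (fun x => fderiv ℝ F x b) z a := by
  have hF' : DifferentiableAt ℝ (fderiv ℝ F) z :=
    (hF.fderiv_right (m := 1) le_rfl).differentiableAt one_ne_zero
  simp only [fderiv_clm_apply hF' (differentiableAt_const _), fderiv_const_apply,
    ContinuousLinearMap.comp_zero, zero_add, ContinuousLinearMap.flip_apply]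
  exact hF.isSymmSndFDerivAt (by simp) b a

theorem ContDiffOn.contDiffAt_two {E' : Type*} [NormedAddCommGroup E'] [NormedSpace ℝ E']
    {f : E → E'} {U : Set E} (hf : ContDiffOn ℝ (⊤ : ℕ∞) f U) (hU : IsOpen U) (hz : z ∈ U) :
    ContDiffAt ℝ 2 f z :=
  (hf.contDiffAt (hU.mem_nhds hz)).of_le (WithTop.coe_le_coe.2 le_top)

theorem ContDiffOn.differentiableAt_of_isOpen {E' : Type*} [NormedAddCommGroup E']
    [NormedSpace ℝ E'] {f : E → E'} {U : Set E} (hf : ContDiffOn ℝ (⊤ : ℕ∞) f U)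
    (hU : IsOpen U) (hz : z ∈ U) : DifferentiableAt ℝ f z :=
  (hf.contDiffAt_two hU hz).differentiableAt two_ne_zero

end FDerivApply

section MaterialDerivative

variable {d : ℕ} {U : Set (Spc d)} {v : Spc d → Fin d → ℝ} {F G : Spc d → ℝ} {z : Spc d}

theorem mdt_eq_fderiv (v : Spc d → Fin d → ℝ) (F : Spc d → ℝ) (z : Spc d) :
    mdt v F z = fderiv ℝ F z (1, v z) := by
  have h : ((1 : ℝ), v z) = (1, 0) + ∑ i, v z i • ((0 : ℝ), Pi.single i (1 : ℝ)) := by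
    ext i <;> simp [Prod.fst_sum, Prod.snd_sum, Finset.sum_apply, Pi.single_apply]
  rw [h, map_add, map_sum]
  simp only [map_smul, smul_eq_mul]
  rfl

theorem pd_add (hF : DifferentiableAt ℝ F z) (hG : DifferentiableAt ℝ G z) (i : Fin d) :
    pd i (fun x => F x + G x) z = pd i F z + pd i G z := by
  simp only [pd, fderiv_fun_add hF hG, add_apply]

theorem pd_mul (hF : DifferentiableAt ℝ F z) (hG : DifferentiableAt ℝ G z) (i : Fin d) :
    pd i (fun x => F x * G x) z = pd i F z * G z + F z * pd i G z :=
  fderiv_apply_mul hF hG _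

theorem pd_sum {ι : Type*} (s : Finset ι) {F : ι → Spc d → ℝ}
    (hF : ∀ j ∈ s, DifferentiableAt ℝ (F j) z) (i : Fin d) :
    pd i (fun x => ∑ j ∈ s, F j x) z = ∑ j ∈ s, pd i (F j) z :=
  fderiv_apply_sum s hF _

theorem pd_sum_mul {ι : Type*} (s : Finset ι) {A B : ι → Spc d → ℝ}
    (hA : ∀ j ∈ s, DifferentiableAt ℝ (A j) z) (hB : ∀ j ∈ s, DifferentiableAt ℝ (B j) z)
    (i : Fin d) :
    pd i (fun x => ∑ j ∈ s, A j x * B j x) z =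
      ∑ j ∈ s, (pd i (A j) z * B j z + A j z * pd i (B j) z) := by
  rw [pd_sum s fun j hj => (hA j hj).fun_mul (hB j hj)]
  exact sum_congr rfl fun j hj => pd_mul (hA j hj) (hB j hj) i

theorem pd_neg_sub_const (c : ℝ) (i : Fin d) : pd i (fun x => -F x - c) z = -pd i F z := by
  simp only [pd, fderiv_sub_const, fderiv_fun_neg, neg_apply]

theorem mdt_mul (hF : DifferentiableAt ℝ F z) (hG : DifferentiableAt ℝ G z) :
    mdt v (fun x => F x * G x) z = mdt v F z * G z + F z * mdt v G z := by
  simp only [mdt_eq_fderiv]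
  exact fderiv_apply_mul hF hG _

theorem mdt_sum {ι : Type*} (s : Finset ι) {F : ι → Spc d → ℝ}
    (hF : ∀ j ∈ s, DifferentiableAt ℝ (F j) z) :
    mdt v (fun x => ∑ j ∈ s, F j x) z = ∑ j ∈ s, mdt v (F j) z := by
  simp only [mdt_eq_fderiv]
  exact fderiv_apply_sum s hF _

theorem mdt_neg : mdt v (fun x => -F x) z = -mdt v F z := by
  simp only [mdt_eq_fderiv, fderiv_fun_neg, neg_apply]

theorem mdt_sum_sum_mul_transpose {A : Fin d → Fin d → Spc d → ℝ}
    (hA : ∀ i j, DifferentiableAt ℝ (A i j) z) :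
    mdt v (fun x => ∑ i, ∑ j, A i j x * A j i x) z = 2 * ∑ i, ∑ j, A i j z * mdt v (A j i) z := by
  have hrow : ∀ i, DifferentiableAt ℝ (fun x => ∑ j, A i j x * A j i x) z := fun i =>
    DifferentiableAt.fun_sum fun j _ => (hA i j).fun_mul (hA j i)
  have hexpand : ∀ i, mdt v (fun x => ∑ j, A i j x * A j i x) z =
      ∑ j, (mdt v (A i j) z * A j i z + A i j z * mdt v (A j i) z) := fun i => by
    rw [mdt_sum _ fun j _ => (hA i j).fun_mul (hA j i)]
    exact sum_congr rfl fun j _ => mdt_mul (hA i j) (hA j i)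
  have hswap : ∑ i, ∑ j, mdt v (A i j) z * A j i z = ∑ i, ∑ j, A i j z * mdt v (A j i) z := by
    rw [sum_comm]
    exact sum_congr rfl fun _ _ => sum_congr rfl fun _ _ => mul_comm _ _
  rw [mdt_sum _ fun i _ => hrow i]
  simp only [hexpand, sum_add_distrib, hswap, two_mul]

theorem Filter.EventuallyEq.pd_eq (h : F =ᶠ[𝓝 z] G) (i : Fin d) : pd i F z = pd i G z := by
  rw [pd, pd, h.fderiv_eq]

theorem Filter.EventuallyEq.mdt_eq (h : F =ᶠ[𝓝 z] G) : mdt v F z = mdt v G z := by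
  rw [mdt_eq_fderiv, mdt_eq_fderiv, h.fderiv_eq]

theorem ContDiffAt.differentiableAt_pd (hF : ContDiffAt ℝ 2 F z) (i : Fin d) :
    DifferentiableAt ℝ (pd i F) z :=
  hF.differentiableAt_fderiv_apply _

theorem pd_comm (hF : ContDiffAt ℝ 2 F z) (i j : Fin d) : pd i (pd j F) z = pd j (pd i F) z :=
  fderiv_fderiv_apply_comm hF _ _

theorem pd_mdt (hF : ContDiffAt ℝ 2 F z) (hv : DifferentiableAt ℝ v z) (k : Fin d) :
    pd k (mdt v F) z = mdt v (pd k F) z + ∑ i, pd k (fun x => v x i) z * pd i F z := by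
  have hvi : ∀ i, DifferentiableAt ℝ (fun x => v x i) z := differentiableAt_pi.1 hv
  have hterm : ∀ i, DifferentiableAt ℝ (fun x => v x i * pd i F x) z := fun i =>
    (hvi i).fun_mul (hF.differentiableAt_pd i)
  rw [show mdt v F = fun x => fderiv ℝ F x (1, 0) + ∑ i, v x i * pd i F x from rfl,
    pd_add (hF.differentiableAt_fderiv_apply _) (DifferentiableAt.fun_sum fun i _ => hterm i),
    pd_sum _ fun i _ => hterm i]
  have hdt : pd k (fun x => fderiv ℝ F x (1, 0)) z = fderiv ℝ (pd k F) z (1, 0) :=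
    fderiv_fderiv_apply_comm hF _ _
  have hprod : ∀ i, pd k (fun x => v x i * pd i F x) z =
      pd k (fun x => v x i) z * pd i F z + v z i * pd i (pd k F) z := fun i => by
    rw [pd_mul (hvi i) (hF.differentiableAt_pd i), pd_comm hF k i]
  simp only [hdt, hprod, mdt, sum_add_distrib]
  ring

theorem contDiffOn_pd (hU : IsOpen U) (hF : ContDiffOn ℝ (⊤ : ℕ∞) F U) (i : Fin d) :
    ContDiffOn ℝ (⊤ : ℕ∞) (pd i F) U :=
  (hF.fderiv_of_isOpen hU (by simp)).clm_apply contDiffOn_const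

theorem contDiffOn_mdt (hU : IsOpen U) (hv : ContDiffOn ℝ (⊤ : ℕ∞) v U)
    (hF : ContDiffOn ℝ (⊤ : ℕ∞) F U) : ContDiffOn ℝ (⊤ : ℕ∞) (mdt v F) U := by
  rw [show mdt v F = fun x => fderiv ℝ F x (1, v x) from funext (mdt_eq_fderiv v F)]
  exact (hF.fderiv_of_isOpen hU (by simp)).clm_apply (contDiffOn_const.prodMk hv)

theorem lap_mdt (hU : IsOpen U) (hv : ContDiffOn ℝ (⊤ : ℕ∞) v U)
    (hF : ContDiffOn ℝ (⊤ : ℕ∞) F U) (hz : z ∈ U) :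
    lap (mdt v F) z = mdt v (lap F) z + ∑ j, lap (fun x => v x j) z * pd j F z +
      2 * ∑ i, ∑ j, pd i (pd j F) z * pd i (fun x => v x j) z := by
  have D : ∀ {G : Spc d → ℝ}, ContDiffOn ℝ (⊤ : ℕ∞) G U → DifferentiableAt ℝ G z :=
    fun hG => hG.differentiableAt_of_isOpen hU hz
  have hvj : ∀ j, ContDiffOn ℝ (⊤ : ℕ∞) (fun x => v x j) U := contDiffOn_pi.1 hv
  have hk : ∀ k, pd k (pd k (mdt v F)) z = mdt v (pd k (pd k F)) z +
      ∑ j, pd k (pd k (fun x => v x j)) z * pd j F z +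
      2 * ∑ j, pd k (pd j F) z * pd k (fun x => v x j) z := by
    intro k
    have hloc : pd k (mdt v F) =ᶠ[𝓝 z]
        fun x => mdt v (pd k F) x + ∑ j, pd k (fun x => v x j) x * pd j F x := by
      filter_upwards [hU.mem_nhds hz] with x hx
      exact pd_mdt (hF.contDiffAt_two hU hx) (hv.differentiableAt_of_isOpen hU hx) k
    have hterm : ∀ j, DifferentiableAt ℝ (fun x => pd k (fun x => v x j) x * pd j F x) z :=
      fun j => (D (contDiffOn_pd hU (hvj j) k)).fun_mul (D (contDiffOn_pd hU hF j))
    have hprod : ∀ j, pd k (fun x => pd k (fun x => v x j) x * pd j F x) z =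
        pd k (pd k (fun x => v x j)) z * pd j F z + pd k (pd j F) z * pd k (fun x => v x j) z :=
      fun j => by
        rw [pd_mul (D (contDiffOn_pd hU (hvj j) k)) (D (contDiffOn_pd hU hF j))]
        ring
    rw [hloc.pd_eq, pd_add (D (contDiffOn_mdt hU hv (contDiffOn_pd hU hF k)))
        (DifferentiableAt.fun_sum fun j _ => hterm j),
      pd_sum _ fun j _ => hterm j,
      pd_mdt ((contDiffOn_pd hU hF k).contDiffAt_two hU hz) (hv.differentiableAt_of_isOpen hU hz) k]
    simp only [hprod, sum_add_distrib, pd_comm (hF.contDiffAt_two hU hz) _ k,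
      mul_comm (pd k (pd _ F) z)]
    ring
  have hmdt : ∑ k, mdt v (pd k (pd k F)) z = mdt v (lap F) z :=
    (mdt_sum _ fun k _ => D (contDiffOn_pd hU (contDiffOn_pd hU hF k) k)).symm
  have hlapv : ∑ k, ∑ j, pd k (pd k (fun x => v x j)) z * pd j F z =
      ∑ j, lap (fun x => v x j) z * pd j F z := by
    rw [sum_comm]
    simp only [lap, sum_mul]
  simp only [lap, hk, sum_add_distrib, ← mul_sum] at hmdt hlapv ⊢
  rw [hmdt, hlapv]

theorem sum_pd_sum_pd_velocity_mul_pd (hU : IsOpen U) (hv : ContDiffOn ℝ (⊤ : ℕ∞) v U)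
    (hF : ContDiffOn ℝ (⊤ : ℕ∞) F U) (hz : z ∈ U) :
    ∑ i, pd i (fun x => ∑ j, pd i (fun y => v y j) x * pd j F x) z =
      ∑ j, lap (fun x => v x j) z * pd j F z +
        ∑ i, ∑ j, pd i (pd j F) z * pd i (fun x => v x j) z := by
  have D : ∀ {G : Spc d → ℝ}, ContDiffOn ℝ (⊤ : ℕ∞) G U → DifferentiableAt ℝ G z :=
    fun hG => hG.differentiableAt_of_isOpen hU hz
  have hvj : ∀ j, ContDiffOn ℝ (⊤ : ℕ∞) (fun x => v x j) U := contDiffOn_pi.1 hv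
  simp only [pd_sum_mul _ (fun j _ => D (contDiffOn_pd hU (hvj j) _))
    (fun j _ => D (contDiffOn_pd hU hF j)), sum_add_distrib, lap, sum_mul]
  rw [sum_comm]
  simp only [mul_comm (pd _ (fun x => v x _) z)]

theorem sum_pd_sum_pd_mul_pd_velocity (hU : IsOpen U) (hv : ContDiffOn ℝ (⊤ : ℕ∞) v U)
    (hdiv : ∀ x ∈ U, ∑ i, pd i (fun y => v y i) x = 0) (hF : ContDiffOn ℝ (⊤ : ℕ∞) F U)
    (hz : z ∈ U) :
    ∑ i, pd i (fun x => ∑ j, pd j F x * pd j (fun y => v y i) x) z =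
      ∑ i, ∑ j, pd i (pd j F) z * pd i (fun x => v x j) z := by
  have D : ∀ {G : Spc d → ℝ}, ContDiffOn ℝ (⊤ : ℕ∞) G U → DifferentiableAt ℝ G z :=
    fun hG => hG.differentiableAt_of_isOpen hU hz
  have hvj : ∀ j, ContDiffOn ℝ (⊤ : ℕ∞) (fun x => v x j) U := contDiffOn_pi.1 hv
  have hdiv' : ∀ j, ∑ i, pd i (pd j (fun y => v y i)) z = 0 := fun j => by
    have hloc : (fun x => ∑ i, pd i (fun y => v y i) x) =ᶠ[𝓝 z] fun _ => 0 := by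
      filter_upwards [hU.mem_nhds hz] with x hx using hdiv x hx
    calc ∑ i, pd i (pd j (fun y => v y i)) z = ∑ i, pd j (pd i (fun y => v y i)) z :=
          sum_congr rfl fun i _ => pd_comm ((hvj i).contDiffAt_two hU hz) i j
      _ = pd j (fun x => ∑ i, pd i (fun y => v y i) x) z :=
          (pd_sum _ (fun i _ => D (contDiffOn_pd hU (hvj i) i)) j).symm
      _ = 0 := by rw [hloc.pd_eq]; simp [pd]
  simp only [pd_sum_mul _ (fun j _ => D (contDiffOn_pd hU hF j))
    (fun j _ => D (contDiffOn_pd hU (hvj _) j)), sum_add_distrib]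
  rw [sum_comm (f := fun i j => pd j F z * pd i (pd j fun y => v y i) z)]
  simp only [← mul_sum, hdiv', mul_zero, sum_const_zero, add_zero]
  rw [sum_comm]
  simp only [pd_comm (hF.contDiffAt_two hU hz) _ _]

namespace IsEulerOn

variable {g : ℝ} {p : Spc d → ℝ}

theorem mdt_pd (he : IsEulerOn g U v p) (hU : IsOpen U) (hv : ContDiffOn ℝ (⊤ : ℕ∞) v U)
    (hz : z ∈ U) (i j : Fin d) :
    mdt v (pd j (fun x => v x i)) z =
      -pd j (pd i p) z - ∑ k, pd j (fun x => v x k) z * pd k (fun x => v x i) z := by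
  have hloc : mdt v (fun x => v x i) =ᶠ[𝓝 z]
      fun x => -pd i p x - (if (i : ℕ) = d - 1 then g else 0) := by
    filter_upwards [hU.mem_nhds hz] with x hx using he.1 x hx i
  have hcomm := pd_mdt ((contDiffOn_pi.1 hv i).contDiffAt_two hU hz)
    (hv.differentiableAt_of_isOpen hU hz) j
  rw [hloc.pd_eq, pd_neg_sub_const] at hcomm
  linarith

theorem lap_pressure (he : IsEulerOn g U v p) (hU : IsOpen U) (hv : ContDiffOn ℝ (⊤ : ℕ∞) v U)
    (hz : z ∈ U) :
    lap p z = -∑ i, ∑ j, pd i (fun x => v x j) z * pd j (fun x => v x i) z := by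
  have hdiv : mdt v (fun x => ∑ i, pd i (fun y => v y i) x) z = 0 := by
    have hloc : (fun x => ∑ i, pd i (fun y => v y i) x) =ᶠ[𝓝 z] fun _ => 0 := by
      filter_upwards [hU.mem_nhds hz] with x hx using he.2 x hx
    simp only [hloc.mdt_eq, mdt_eq_fderiv, fderiv_const_apply, zero_apply]
  rw [mdt_sum _ fun i _ =>
    (contDiffOn_pd hU (contDiffOn_pi.1 hv i) i).differentiableAt_of_isOpen hU hz] at hdiv
  simp only [he.mdt_pd hU hv hz, sum_sub_distrib, sum_neg_distrib] at hdiv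
  simp only [lap]
  linarith

theorem mdt_lap_pressure (he : IsEulerOn g U v p) (hU : IsOpen U)
    (hv : ContDiffOn ℝ (⊤ : ℕ∞) v U) (hp : ContDiffOn ℝ (⊤ : ℕ∞) p U) (hz : z ∈ U) :
    mdt v (lap p) z = 2 * ∑ i, ∑ j, pd i (pd j p) z * pd i (fun x => v x j) z +
      2 * ∑ i, ∑ j, ∑ k,
        pd i (fun x => v x j) z * pd j (fun x => v x k) z * pd k (fun x => v x i) z := by
  have hloc : lap p =ᶠ[𝓝 z]
      fun x => -∑ i, ∑ j, pd i (fun x => v x j) x * pd j (fun x => v x i) x := by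
    filter_upwards [hU.mem_nhds hz] with x hx using he.lap_pressure hU hv hx
  rw [hloc.mdt_eq, mdt_neg, mdt_sum_sum_mul_transpose fun i j =>
    (contDiffOn_pd hU (contDiffOn_pi.1 hv j) i).differentiableAt_of_isOpen hU hz]
  simp only [he.mdt_pd hU hv hz, pd_comm (hp.contDiffAt_two hU hz) _ _, mul_sub, mul_neg,
    mul_sum, sum_sub_distrib, sum_neg_distrib]
  simp only [mul_assoc, mul_comm (pd _ (pd _ p) z)]
  ring

end IsEulerOn

end MaterialDerivative

theorem statement8_general (d : ℕ) (g : ℝ)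
    (U : Set (Spc d)) (hU : IsOpen U)
    (v : Spc d → Fin d → ℝ) (p : Spc d → ℝ)
    (hv : ContDiffOn ℝ (⊤ : ℕ∞) v U) (hp : ContDiffOn ℝ (⊤ : ℕ∞) p U)
    (heuler : IsEulerOn g U v p) :
    ∀ z ∈ U,
      (lap (mdt v p) z =
          (∑ j : Fin d, lap (fun w => v w j) z * pd j p z) +
            4 * ∑ i : Fin d, ∑ j : Fin d, pd i (pd j p) z * pd i (fun w => v w j) z +
            2 * ∑ i : Fin d, ∑ j : Fin d, ∑ k : Fin d,
              pd i (fun w => v w j) z * pd j (fun w => v w k) z * pd k (fun w => v w i) z) ∧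
      (lap (mdt v p) z =
          (∑ i : Fin d, pd i (fun w => ∑ j : Fin d, pd i (fun w' => v w' j) w * pd j p w) z) +
            3 * ∑ i : Fin d, pd i (fun w => ∑ j : Fin d, pd j p w * pd j (fun w' => v w' i) w) z +
            2 * ∑ i : Fin d, ∑ j : Fin d, ∑ k : Fin d,
              pd i (fun w => v w j) z * pd j (fun w => v w k) z * pd k (fun w => v w i) z) := by
  intro z hz
  rw [lap_mdt hU hv hp hz, heuler.mdt_lap_pressure hU hv hp hz,
    sum_pd_sum_pd_velocity_mul_pd hU hv hp hz, sum_pd_sum_pd_mul_pd_velocity hU hv heuler.2 hp hz]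
  constructor <;> ring

/-- For any smooth solution of the incompressible Euler equations with gravity
`g ≥ 0` on an open set `U ⊆ ℝ_t × ℝᵈ_x`, one has on `U` the identity
`Δ(D_t p) = Σ_j (Δ v_j) ∂_j p + 4 Σ_{i,j} ∂_i∂_j p ∂_i v_j + 2 Σ_{i,j,k} ∂_i v_j ∂_j v_k ∂_k v_i`,
equivalently (divergence form)
`Δ(D_t p) = Σ_i ∂_i(Σ_j ∂_i v_j ∂_j p) + 3 Σ_i ∂_i(Σ_j ∂_j p ∂_j v_i) + 2 Σ ∂_i v_j ∂_j v_k ∂_k v_i`. -/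
theorem statement8 (d : ℕ) (hd : 1 ≤ d) (g : ℝ) (hg : 0 ≤ g)
    (U : Set (Spc d)) (hU : IsOpen U)
    (v : Spc d → Fin d → ℝ) (p : Spc d → ℝ)
    (hv : ContDiffOn ℝ (⊤ : ℕ∞) v U) (hp : ContDiffOn ℝ (⊤ : ℕ∞) p U)
    (heuler : IsEulerOn g U v p) :
    ∀ z ∈ U,
      (lap (mdt v p) z =
          (∑ j : Fin d, lap (fun w => v w j) z * pd j p z) +
            4 * ∑ i : Fin d, ∑ j : Fin d, pd i (pd j p) z * pd i (fun w => v w j) z +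
            2 * ∑ i : Fin d, ∑ j : Fin d, ∑ k : Fin d,
              pd i (fun w => v w j) z * pd j (fun w => v w k) z * pd k (fun w => v w i) z) ∧
      (lap (mdt v p) z =
          (∑ i : Fin d, pd i (fun w => ∑ j : Fin d, pd i (fun w' => v w' j) w * pd j p w) z) +
            3 * ∑ i : Fin d, pd i (fun w => ∑ j : Fin d, pd j p w * pd j (fun w' => v w' i) w) z +
            2 * ∑ i : Fin d, ∑ j : Fin d, ∑ k : Fin d,
              pd i (fun w => v w j) z * pd j (fun w => v w k) z * pd k (fun w => v w i) z) :=
  statement8_general d g U hU v p hv hp heuler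
end
end

section
/- Let d ≥ 1, g ≥ 0, and let v, p be smooth on an open set U ⊆ ℝ_t × ℝᵈ_x satisfying only the momentum equation ∂_t v + (v·∇)v = −∇p − g e_d on U (no divergence condition required). Then for every index i ∈ {1,…,d} one has on U: D_t(D_t(∂_i p)) = (1/2) ∂_i( Σ_k (∂_k p)² ) + ∂_i( D_t(D_t p) ) + 2 Σ_{j,k} ∂_i v_j ∂_j v_k ∂_k p − 2 Σ_j ∂_i v_j ∂_j (D_t p). -/
noncomputable section

namespace S9

variable {d : ℕ}

def dd (w : Spc d) (F : Spc d → ℝ) (z : Spc d) : ℝ := fderiv ℝ F z w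

lemma pd_eq_dd (i : Fin d) (F : Spc d → ℝ) : pd i F = dd (0, Pi.single i 1) F := rfl

lemma mdt_eq_dd (v : Spc d → Fin d → ℝ) (F : Spc d → ℝ) (z : Spc d) :
    mdt v F z = dd (1,0) F z + ∑ i : Fin d, v z i * dd (0, Pi.single i 1) F z := rfl

variable {U : Set (Spc d)}

lemma top_add_one : ((⊤:ℕ∞) : WithTop ℕ∞) + 1 ≤ ((⊤:ℕ∞) : WithTop ℕ∞) := by
  exact_mod_cast (le_top : (⊤:ℕ∞)+1 ≤ ⊤)

lemma contDiffOn_dd (hU : IsOpen U) {F : Spc d → ℝ} (hF : ContDiffOn ℝ (⊤:ℕ∞) F U)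
    (w : Spc d) : ContDiffOn ℝ (⊤:ℕ∞) (dd w F) U :=
  (hF.fderiv_of_isOpen hU top_add_one).clm_apply contDiffOn_const

lemma diffAt (hU : IsOpen U) {E : Type*} [NormedAddCommGroup E] [NormedSpace ℝ E]
    {F : Spc d → E} (hF : ContDiffOn ℝ (⊤:ℕ∞) F U)
    {z : Spc d} (hz : z ∈ U) : DifferentiableAt ℝ F z :=
  (hF.contDiffAt (hU.mem_nhds hz)).differentiableAt (by simp)

lemma dd_dd (hU : IsOpen U) {F : Spc d → ℝ} (hF : ContDiffOn ℝ (⊤:ℕ∞) F U)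
    {z : Spc d} (hz : z ∈ U) (a b : Spc d) :
    dd a (dd b F) z = fderiv ℝ (fderiv ℝ F) z a b := by
  have hdf : DifferentiableAt ℝ (fderiv ℝ F) z :=
    diffAt hU (hF.fderiv_of_isOpen hU top_add_one) hz
  show fderiv ℝ (fun y => fderiv ℝ F y b) z a = _
  rw [fderiv_clm_apply hdf (differentiableAt_const b)]
  simp

lemma dd_comm (hU : IsOpen U) {F : Spc d → ℝ} (hF : ContDiffOn ℝ (⊤:ℕ∞) F U)
    {z : Spc d} (hz : z ∈ U) (a b : Spc d) :
    dd a (dd b F) z = dd b (dd a F) z := by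
  rw [dd_dd hU hF hz, dd_dd hU hF hz]
  exact ((hF.contDiffAt (hU.mem_nhds hz)).isSymmSndFDerivAt (by
    rw [show (2 : WithTop ℕ∞) = ((2:ℕ∞) : WithTop ℕ∞) from rfl]
    simp only [minSmoothness_of_isRCLikeNormedField]; exact WithTop.coe_le_coe.2 le_top)) a b

lemma dd_congr {F G : Spc d → ℝ} {z : Spc d} (h : F =ᶠ[nhds z] G) (w : Spc d) :
    dd w F z = dd w G z := by unfold dd; rw [h.fderiv_eq]

lemma mdt_congr {v : Spc d → Fin d → ℝ} {F G : Spc d → ℝ} {z : Spc d}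
    (h : F =ᶠ[nhds z] G) : mdt v F z = mdt v G z := by
  unfold mdt pd; rw [h.fderiv_eq]

variable {A B : Spc d → ℝ} {z : Spc d}

lemma dd_sub (hA : DifferentiableAt ℝ A z) (hB : DifferentiableAt ℝ B z) (w : Spc d) :
    dd w (fun y => A y - B y) z = dd w A z - dd w B z := by
  unfold dd; rw [fderiv_fun_sub hA hB]; rfl

lemma dd_add (hA : DifferentiableAt ℝ A z) (hB : DifferentiableAt ℝ B z) (w : Spc d) :
    dd w (fun y => A y + B y) z = dd w A z + dd w B z := by
  unfold dd; rw [fderiv_fun_add hA hB]; rfl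

lemma dd_neg (w : Spc d) : dd w (fun y => -A y) z = - dd w A z := by
  unfold dd; rw [fderiv_fun_neg]; rfl

lemma dd_const (c : ℝ) (w : Spc d) : dd w (fun _ => c) z = 0 := by
  unfold dd; simp

lemma dd_mul (hA : DifferentiableAt ℝ A z) (hB : DifferentiableAt ℝ B z) (w : Spc d) :
    dd w (fun y => A y * B y) z = A z * dd w B z + B z * dd w A z := by
  unfold dd; rw [fderiv_fun_mul hA hB]; simp

lemma dd_sum {ι : Type*} {s : Finset ι} {A : ι → Spc d → ℝ}
    (h : ∀ j ∈ s, DifferentiableAt ℝ (A j) z) (w : Spc d) :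
    dd w (fun y => ∑ j ∈ s, A j y) z = ∑ j ∈ s, dd w (A j) z := by
  unfold dd; rw [fderiv_fun_sum h]; simp

lemma sum_pull (c : ℝ) (f g : Fin d → ℝ) :
    ∑ i : Fin d, g i * (c * f i) = c * ∑ i : Fin d, g i * f i := by
  rw [Finset.mul_sum]; exact Finset.sum_congr rfl fun i _ => by ring

variable {v : Spc d → Fin d → ℝ}

lemma mdt_sub (hA : DifferentiableAt ℝ A z) (hB : DifferentiableAt ℝ B z) :
    mdt v (fun y => A y - B y) z = mdt v A z - mdt v B z := by
  simp only [mdt_eq_dd, dd_sub hA hB, mul_sub, Finset.sum_sub_distrib]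
  ring

lemma mdt_mul (hA : DifferentiableAt ℝ A z) (hB : DifferentiableAt ℝ B z) :
    mdt v (fun y => A y * B y) z = A z * mdt v B z + B z * mdt v A z := by
  simp only [mdt_eq_dd, dd_mul hA hB, mul_add, Finset.sum_add_distrib, sum_pull]
  ring

lemma mdt_sum {ι : Type*} {s : Finset ι} {A : ι → Spc d → ℝ}
    (h : ∀ j ∈ s, DifferentiableAt ℝ (A j) z) :
    mdt v (fun y => ∑ j ∈ s, A j y) z = ∑ j ∈ s, mdt v (A j) z := by
  simp only [mdt_eq_dd, dd_sum h, Finset.mul_sum, Finset.sum_add_distrib]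
  rw [Finset.sum_comm]

lemma contDiffOn_proj (hv : ContDiffOn ℝ (⊤:ℕ∞) v U) (j : Fin d) :
    ContDiffOn ℝ (⊤:ℕ∞) (fun z => v z j) U := by
  exact (ContinuousLinearMap.proj j).contDiff.comp_contDiffOn hv

lemma contDiffOn_mdt (hU : IsOpen U) (hv : ContDiffOn ℝ (⊤:ℕ∞) v U)
    {F : Spc d → ℝ} (hF : ContDiffOn ℝ (⊤:ℕ∞) F U) :
    ContDiffOn ℝ (⊤:ℕ∞) (mdt v F) U := by
  have : mdt v F = fun z => dd (1,0) F z + ∑ i : Fin d, v z i * dd (0, Pi.single i 1) F z := rfl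
  rw [this]
  exact (contDiffOn_dd hU hF _).add
    (ContDiffOn.sum fun i _ => (contDiffOn_proj hv i).mul (contDiffOn_dd hU hF _))

lemma comm_pd_mdt (hU : IsOpen U) (hv : ContDiffOn ℝ (⊤:ℕ∞) v U)
    {F : Spc d → ℝ} (hF : ContDiffOn ℝ (⊤:ℕ∞) F U) {z : Spc d} (hz : z ∈ U) (i : Fin d) :
    mdt v (pd i F) z = pd i (mdt v F) z - ∑ j : Fin d, pd i (fun w => v w j) z * pd j F z := by
  have hdt : DifferentiableAt ℝ (dd (1,0) F) z := diffAt hU (contDiffOn_dd hU hF _) hz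
  have hdj : ∀ j : Fin d, DifferentiableAt ℝ (dd (0, Pi.single j 1) F) z :=
    fun j => diffAt hU (contDiffOn_dd hU hF _) hz
  have hvj : ∀ j : Fin d, DifferentiableAt ℝ (fun w => v w j) z :=
    fun j => diffAt hU (contDiffOn_proj hv j) hz
  have h1 : pd i (mdt v F) z
      = dd (0, Pi.single i 1) (dd (1,0) F) z
        + ∑ j : Fin d, (v z j * dd (0, Pi.single i 1) (dd (0, Pi.single j 1) F) z
            + dd (0, Pi.single j 1) F z * dd (0, Pi.single i 1) (fun w => v w j) z) := by
    have : pd i (mdt v F) = dd (0, Pi.single i 1)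
        (fun w => dd (1,0) F w + ∑ j : Fin d, v w j * dd (0, Pi.single j 1) F w) := rfl
    rw [this,
      dd_add (A := dd (1,0) F)
        (B := fun w => ∑ j : Fin d, v w j * dd (0, Pi.single j 1) F w)
        hdt (DifferentiableAt.fun_sum fun j _ => ((hvj j).mul (hdj j))) _,
      dd_sum (A := fun j w => v w j * dd (0, Pi.single j 1) F w)
        (fun j _ => ((hvj j).mul (hdj j))) _]
    exact congrArg _ (Finset.sum_congr rfl fun j _ => dd_mul (hvj j) (hdj j) _)
  rw [h1]
  have h2 : mdt v (pd i F) z = dd (1,0) (dd (0, Pi.single i 1) F) z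
      + ∑ j : Fin d, v z j * dd (0, Pi.single j 1) (dd (0, Pi.single i 1) F) z := rfl
  rw [h2]
  rw [dd_comm hU hF hz (0, Pi.single i 1) (1,0)]
  have h3 : ∀ j : Fin d, dd (0, Pi.single i 1) (dd (0, Pi.single j 1) F) z
      = dd (0, Pi.single j 1) (dd (0, Pi.single i 1) F) z :=
    fun j => dd_comm hU hF hz _ _
  simp only [h3, Finset.sum_add_distrib]
  have : ∀ j : Fin d, pd i (fun w => v w j) z = dd (0, Pi.single i 1) (fun w => v w j) z :=
    fun j => rfl
  simp only [this]
  have : ∀ j : Fin d, pd j F z = dd (0, Pi.single j 1) F z := fun j => rfl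
  simp only [this]
  have hc : ∑ j : Fin d, dd (0, Pi.single j 1) F z * dd (0, Pi.single i 1) (fun w => v w j) z
      = ∑ j : Fin d, dd (0, Pi.single i 1) (fun w => v w j) z * dd (0, Pi.single j 1) F z :=
    Finset.sum_congr rfl fun j _ => by ring
  rw [hc]; ring


lemma final_algebra (n : ℕ) (A P Q R : Fin n → ℝ) (B : Fin n → Fin n → ℝ) (S : ℝ) :
    (S - ∑ j : Fin n, A j * R j)
      - ∑ j : Fin n, (A j * (R j - ∑ k : Fin n, B j k * P k)
          + P j * (-Q j - ∑ k : Fin n, A k * B k j)) =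
    (1/2) * ∑ k : Fin n, (P k * Q k + P k * Q k) + S
      + 2 * ∑ j : Fin n, ∑ k : Fin n, A j * B j k * P k
      - 2 * ∑ j : Fin n, A j * R j := by
  have h1 : ∑ j : Fin n, (A j * (R j - ∑ k : Fin n, B j k * P k)
        + P j * (-Q j - ∑ k : Fin n, A k * B k j))
      = ∑ j : Fin n, ((A j * R j - ∑ k : Fin n, A j * B j k * P k)
        - (P j * Q j + ∑ k : Fin n, P j * (A k * B k j))) := by
    refine Finset.sum_congr rfl fun j _ => ?_
    rw [mul_sub, mul_sub, Finset.mul_sum, Finset.mul_sum,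
      show ∑ k : Fin n, A j * (B j k * P k) = ∑ k : Fin n, A j * B j k * P k from
        Finset.sum_congr rfl fun k _ => (mul_assoc _ _ _).symm]
    ring
  have h2 : ∑ j : Fin n, ∑ k : Fin n, P j * (A k * B k j)
      = ∑ j : Fin n, ∑ k : Fin n, A j * B j k * P k := by
    rw [Finset.sum_comm]
    exact Finset.sum_congr rfl fun j _ => Finset.sum_congr rfl fun k _ => by ring
  rw [h1]
  simp only [Finset.sum_sub_distrib, Finset.sum_add_distrib]
  rw [h2]
  ring

end S9

/-- If `v, p` are smooth on an open set `U ⊆ ℝ_t × ℝᵈ_x` and satisfy only the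
momentum equation `∂_t v + (v·∇)v = −∇p − g e_d` on `U`, then for every `i`:
`D_t(D_t(∂_i p)) = ½ ∂_i(Σ_k (∂_k p)²) + ∂_i(D_t(D_t p)) + 2 Σ_{j,k} ∂_i v_j ∂_j v_k ∂_k p
 − 2 Σ_j ∂_i v_j ∂_j(D_t p)` on `U`. -/
theorem statement9 (d : ℕ) (hd : 1 ≤ d) (g : ℝ) (hg : 0 ≤ g)
    (U : Set (Spc d)) (hU : IsOpen U)
    (v : Spc d → Fin d → ℝ) (p : Spc d → ℝ)
    (hv : ContDiffOn ℝ (⊤ : ℕ∞) v U) (hp : ContDiffOn ℝ (⊤ : ℕ∞) p U)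
    (hmom : ∀ z ∈ U, ∀ j : Fin d,
      mdt v (fun w => v w j) z = -pd j p z - (if (j : ℕ) = d - 1 then g else 0)) :
    ∀ z ∈ U, ∀ i : Fin d,
      mdt v (mdt v (pd i p)) z =
        (1/2) * pd i (fun w => ∑ k : Fin d, pd k p w ^ 2) z +
          pd i (mdt v (mdt v p)) z +
          2 * ∑ j : Fin d, ∑ k : Fin d,
            pd i (fun w => v w j) z * pd j (fun w => v w k) z * pd k p z -
          2 * ∑ j : Fin d, pd i (fun w => v w j) z * pd j (mdt v p) z := by
  intro z hz i
  have sv : ∀ j : Fin d, ContDiffOn ℝ (⊤:ℕ∞) (fun w => v w j) U :=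
    fun j => S9.contDiffOn_proj hv j
  have sDp : ContDiffOn ℝ (⊤:ℕ∞) (mdt v p) U := S9.contDiffOn_mdt hU hv hp
  have dpdj : ∀ j : Fin d, DifferentiableAt ℝ (pd j p) z :=
    fun j => S9.diffAt hU (S9.contDiffOn_dd hU hp _) hz
  have dvj : ∀ j : Fin d, DifferentiableAt ℝ (fun w => v w j) z :=
    fun j => S9.diffAt hU (sv j) hz
  have dpdvj : ∀ j : Fin d, DifferentiableAt ℝ (pd i (fun w => v w j)) z :=
    fun j => S9.diffAt hU (S9.contDiffOn_dd hU (sv j) _) hz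
  have dpdDp : DifferentiableAt ℝ (pd i (mdt v p)) z :=
    S9.diffAt hU (S9.contDiffOn_dd hU sDp _) hz
  have dsum : DifferentiableAt ℝ
      (fun w => ∑ j : Fin d, pd i (fun y => v y j) w * pd j p w) z :=
    DifferentiableAt.fun_sum fun j _ => (dpdvj j).mul (dpdj j)
  have step2 : mdt v (mdt v (pd i p)) z
      = mdt v (fun w => pd i (mdt v p) w
          - ∑ j : Fin d, pd i (fun y => v y j) w * pd j p w) z :=
    S9.mdt_congr (Filter.eventuallyEq_of_mem (hU.mem_nhds hz)
      (fun w hw => S9.comm_pd_mdt hU hv hp hw i))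
  have step4a : mdt v (pd i (mdt v p)) z = pd i (mdt v (mdt v p)) z
      - ∑ j : Fin d, pd i (fun w => v w j) z * pd j (mdt v p) z :=
    S9.comm_pd_mdt hU hv sDp hz i
  have step4b : ∀ j : Fin d, mdt v (pd j p) z = pd j (mdt v p) z
      - ∑ k : Fin d, pd j (fun w => v w k) z * pd k p z :=
    fun j => S9.comm_pd_mdt hU hv hp hz j
  have step4c : ∀ j : Fin d, mdt v (pd i (fun w => v w j)) z
      = pd i (mdt v (fun w => v w j)) z
        - ∑ k : Fin d, pd i (fun w => v w k) z * pd k (fun w => v w j) z :=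
    fun j => S9.comm_pd_mdt hU hv (sv j) hz i
  have step4d : ∀ j : Fin d, pd i (mdt v (fun w => v w j)) z = -(pd i (pd j p) z) := by
    intro j
    have hEm : mdt v (fun w => v w j) =ᶠ[nhds z]
        fun w => -pd j p w - (if (j : ℕ) = d - 1 then g else 0) :=
      Filter.eventuallyEq_of_mem (hU.mem_nhds hz) (fun w hw => hmom w hw j)
    show S9.dd (0, Pi.single i 1) (mdt v (fun w => v w j)) z = -(pd i (pd j p) z)
    rw [S9.dd_congr hEm,
      S9.dd_sub (DifferentiableAt.fun_neg (dpdj j)) (differentiableAt_const _),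
      S9.dd_neg, S9.dd_const, sub_zero]
    rfl
  have hsq : pd i (fun w => ∑ k : Fin d, pd k p w ^ 2) z
      = ∑ k : Fin d, (pd k p z * pd i (pd k p) z + pd k p z * pd i (pd k p) z) := by
    have hfe : (fun w => ∑ k : Fin d, pd k p w ^ 2)
        = fun w => ∑ k : Fin d, pd k p w * pd k p w := by
      funext w; exact Finset.sum_congr rfl fun k _ => pow_two _
    show S9.dd (0, Pi.single i 1) (fun w => ∑ k : Fin d, pd k p w ^ 2) z = _
    rw [hfe, S9.dd_sum (fun k _ => (dpdj k).fun_mul (dpdj k))]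
    exact Finset.sum_congr rfl fun k _ => S9.dd_mul (dpdj k) (dpdj k) _
  have hsum : ∑ j : Fin d, mdt v (fun w => pd i (fun y => v y j) w * pd j p w) z
      = ∑ j : Fin d, (pd i (fun w => v w j) z
          * (pd j (mdt v p) z - ∑ k : Fin d, pd j (fun w => v w k) z * pd k p z)
        + pd j p z * (-(pd i (pd j p) z)
          - ∑ k : Fin d, pd i (fun w => v w k) z * pd k (fun w => v w j) z)) := by
    refine Finset.sum_congr rfl fun j _ => ?_
    rw [S9.mdt_mul (dpdvj j) (dpdj j), step4b j, step4c j, step4d j]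
  rw [step2, S9.mdt_sub dpdDp dsum,
    S9.mdt_sum (A := fun j w => pd i (fun y => v y j) w * pd j p w)
      (fun j _ => (dpdvj j).mul (dpdj j)),
    hsum, step4a, hsq]
  exact S9.final_algebra d (fun j => pd i (fun w => v w j) z) (fun j => pd j p z)
    (fun j => pd i (pd j p) z) (fun j => pd j (mdt v p) z)
    (fun j k => pd j (fun w => v w k) z) (pd i (mdt v (mdt v p)) z)
end
end
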